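/- Let p : Y → Z be a quandle covering (a surjective quandle homomorphism such that p(x̃) = p(ỹ) implies ã◁x̃ = ã◁ỹ for all ã, x̃, ỹ ∈ Y). Then the induced group homomorphism p_* : As(Y) → As(Z) is surjective and its kernel is contained in the center of As(Y). -/

import Mathlib

/-!
Since `p` is onto, the image of `p_*` contains every generator `e_z = e_{p y}`.

For the kernel, let `As(Y)` act on `Y` on the right through inner automorphisms. Because
`g⁻¹ e_x g = e_{x · g}`, an element acting trivially on `Y` commutes with every generator, so it is
central. For a covering, the right translation by `y` depends only on `p y`. Choosing lifts
therefore gives an action of `As(Z)` on `Y` through which the action of `As(Y)` factors via `p_*`.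
So `ker p_*` acts trivially.
-/

/-- A quandle in the convention of the paper. -/
class PQuandle (X : Type*) where
  op : X → X → X
  op_self : ∀ a : X, op a a = a
  op_bij : ∀ a : X, Function.Bijective (fun x => op x a)
  op_distrib : ∀ a b c : X, op (op a b) c = op (op a c) (op b c)

infixl:65 " ◁ " => PQuandle.op

namespace PQuandle

variable {X : Type*} [PQuandle X]

/-- The `n`-fold right operation `x ◁ⁿ y`. -/
def opn (x : X) (n : ℕ) (y : X) : X := (fun z => z ◁ y)^[n] x

/-- The right translation `(· ◁ y)` as a permutation of `X`. -/
noncomputable def act (y : X) : Equiv.Perm X := Equiv.ofBijective _ (op_bij y)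

@[simp] lemma act_apply (y x : X) : act y x = x ◁ y := rfl

/-- The inner automorphism group `Inn(X)`. -/
noncomputable def Inn (X : Type*) [PQuandle X] : Subgroup (Equiv.Perm X) :=
  Subgroup.closure (Set.range (act (X := X)))

/-- The relators `e_{x ◁ y}⁻¹ e_y⁻¹ e_x e_y` of the adjoint group. -/
def adjRels (X : Type*) [PQuandle X] : Set (FreeGroup X) :=
  { r | ∃ x y : X,
      r = (FreeGroup.of (x ◁ y))⁻¹ * (FreeGroup.of y)⁻¹ * FreeGroup.of x * FreeGroup.of y }

/-- The adjoint (enveloping) group `As(X)` of the quandle `X`. -/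
def Adj (X : Type*) [PQuandle X] : Type _ := PresentedGroup (adjRels X)

instance : Group (Adj X) := by unfold Adj; infer_instance

/-- The generator `e_x` of `As(X)`. -/
def gen (x : X) : Adj X := PresentedGroup.of x

lemma gen_rel (x y : X) : gen (x ◁ y) = (gen y)⁻¹ * gen x * gen y := by
  have h : ((FreeGroup.of (x ◁ y))⁻¹ * (FreeGroup.of y)⁻¹ * FreeGroup.of x * FreeGroup.of y :
      FreeGroup X) ∈ Subgroup.normalClosure (adjRels X) :=
    Subgroup.subset_normalClosure ⟨x, y, rfl⟩
  have h2 : ((gen (x ◁ y))⁻¹ * (gen y)⁻¹ * gen x * gen y : Adj X) = 1 := by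
    have := (QuotientGroup.eq_one_iff
      (((FreeGroup.of (x ◁ y))⁻¹ * (FreeGroup.of y)⁻¹ * FreeGroup.of x * FreeGroup.of y :
        FreeGroup X))).mpr h
    exact this
  calc gen (x ◁ y)
      = gen (x ◁ y) * ((gen (x ◁ y))⁻¹ * (gen y)⁻¹ * gen x * gen y) := by rw [h2, mul_one]
    _ = (gen y)⁻¹ * gen x * gen y := by group

lemma act_mul_act (x y : X) : act y * act x = act (x ◁ y) * act y := by
  ext z
  simp only [Equiv.Perm.mul_apply, act_apply]
  exact op_distrib z x y

/-- The homomorphism `As(X) → Perm(X)` sending `e_y` to the inverse of the right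
translation by `y`; it encodes the right action of `As(X)` on `X`. -/
noncomputable def innHom : Adj X →* Equiv.Perm X :=
  PresentedGroup.toGroup (f := fun y : X => (act y)⁻¹) (by
    rintro r ⟨x, y, rfl⟩
    simp only [map_mul, map_inv, FreeGroup.lift_apply_of, inv_inv]
    have := act_mul_act x y
    calc act (x ◁ y) * act y * (act x)⁻¹ * (act y)⁻¹
        = (act y * act x) * (act x)⁻¹ * (act y)⁻¹ := by rw [this]
      _ = 1 := by group)

@[simp] lemma innHom_gen (y : X) : innHom (gen y) = (act y)⁻¹ :=
  PresentedGroup.toGroup.of _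

/-- The right action of `As(X)` on `X`: `x · g`. -/
noncomputable def ract (x : X) (g : Adj X) : X := (innHom g)⁻¹ x

@[simp] lemma ract_gen (x y : X) : ract x (gen y) = x ◁ y := by
  simp [ract]

lemma ract_mul (x : X) (g h : Adj X) : ract x (g * h) = ract (ract x g) h := by
  simp [ract, map_mul]

/-- A quandle is connected if the right action of `As(X)` on `X` is transitive. -/
def Connected (X : Type*) [PQuandle X] : Prop :=
  ∀ x y : X, ∃ g : Adj X, ract x g = y

/-- The homomorphism `ε : As(X) → ℤ` sending every generator `e_x` to `1`. -/
def eps : Adj X →* Multiplicative ℤ :=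
  PresentedGroup.toGroup (f := fun _ : X => Multiplicative.ofAdd 1) (by
    rintro r ⟨x, y, rfl⟩
    simp only [map_mul, map_inv, FreeGroup.lift_apply_of]
    group)

@[simp] lemma eps_gen (x : X) : eps (gen x) = Multiplicative.ofAdd 1 :=
  PresentedGroup.toGroup.of _

/-- The underlying set of the universal covering quandle: `Ker ε`. -/
def covOp (a : X) (g h : (eps (X := X)).ker) : (eps (X := X)).ker :=
  ⟨(gen a)⁻¹ * g.1 * (h.1)⁻¹ * gen a * h.1, by
    have hg : eps g.1 = 1 := g.2
    have hh : eps h.1 = 1 := h.2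
    simp only [MonoidHom.mem_ker, map_mul, map_inv, hg, hh]
    group⟩

/-- `n`-fold covering operation. -/
def covOpn (a : X) (g : (eps (X := X)).ker) (n : ℕ) (h : (eps (X := X)).ker) :
    (eps (X := X)).ker := (fun u => covOp a u h)^[n] g

/-- The right translation of the covering quandle as a permutation. -/
def covAct (a : X) (h : (eps (X := X)).ker) : Equiv.Perm (eps (X := X)).ker where
  toFun g := covOp a g h
  invFun g := ⟨gen a * g.1 * (h.1)⁻¹ * (gen a)⁻¹ * h.1, by
    have hg : eps g.1 = 1 := g.2
    have hh : eps h.1 = 1 := h.2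
    simp only [MonoidHom.mem_ker, map_mul, map_inv, hg, hh]
    group⟩
  left_inv g := by
    apply Subtype.ext
    simp only [covOp]
    group
  right_inv g := by
    apply Subtype.ext
    simp only [covOp]
    group

end PQuandle

open PQuandle in
/-- The homomorphism `As(Y) → As(Z)` induced by a quandle homomorphism. -/
def adjMap {Y Z : Type*} [PQuandle Y] [PQuandle Z] (p : Y → Z)
    (hp : ∀ a b : Y, p (a ◁ b) = p a ◁ p b) : PQuandle.Adj Y →* PQuandle.Adj Z :=
  PresentedGroup.toGroup (f := fun y => PQuandle.gen (p y)) (by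
    rintro r ⟨x, y, rfl⟩
    simp only [map_mul, map_inv, FreeGroup.lift_apply_of]
    rw [hp, PQuandle.gen_rel]
    group)

namespace PQuandle

variable {X : Type*} [PQuandle X]

lemma act_op (x y : X) : act (x ◁ y) = act y * act x * (act y)⁻¹ := by
  rw [act_mul_act, mul_inv_cancel_right]

lemma act_eq_of_map_eq {Z : Type*} {p : X → Z} (hcov : ∀ a x y : X, p x = p y → a ◁ x = a ◁ y)
    {x y : X} (h : p x = p y) : act x = act y :=
  Equiv.ext fun a => hcov a x y h

namespace Adj

@[elab_as_elim]
lemma induction {P : Adj X → Prop} (gen : ∀ x, P (gen x)) (one : P 1)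
    (mul : ∀ g h, P g → P h → P (g * h)) (inv : ∀ g, P g → P g⁻¹) (g : Adj X) : P g := by
  have hg : g ∈ Subgroup.closure (Set.range (PQuandle.gen (X := X))) := by
    rw [show Subgroup.closure (Set.range (PQuandle.gen (X := X))) = ⊤ from
      PresentedGroup.closure_range_of _]
    trivial
  induction hg using Subgroup.closure_induction with
  | mem _ hx => obtain ⟨x, rfl⟩ := hx; exact gen x
  | one => exact one
  | mul _ _ _ _ hg hh => exact mul _ _ hg hh
  | inv _ _ hg => exact inv _ hg

lemma hom_ext {G : Type*} [Group G] {φ ψ : Adj X →* G} (h : ∀ x, φ (gen x) = ψ (gen x)) :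
    φ = ψ :=
  PresentedGroup.ext h

def lift {G : Type*} [Group G] (f : X → G) (hf : ∀ x y, f (x ◁ y) = (f y)⁻¹ * f x * f y) :
    Adj X →* G :=
  PresentedGroup.toGroup (f := f) (by
    rintro r ⟨x, y, rfl⟩
    simp only [map_mul, map_inv, FreeGroup.lift_apply_of, hf]
    group)

@[simp] lemma lift_gen {G : Type*} [Group G] (f : X → G)
    (hf : ∀ x y, f (x ◁ y) = (f y)⁻¹ * f x * f y) (x : X) : lift f hf (gen x) = f x :=
  PresentedGroup.toGroup.of _

end Adj

lemma gen_ract (x : X) (g : Adj X) : gen (ract x g) = g⁻¹ * gen x * g := by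
  induction g using Adj.induction generalizing x with
  | gen y => rw [ract_gen, gen_rel]
  | one => simp [ract]
  | mul g h hg hh => rw [ract_mul, hh, hg]; group
  | inv g hg =>
    have h := hg (ract x g⁻¹)
    rw [← ract_mul, inv_mul_cancel, show ract x 1 = x by simp [ract]] at h
    rw [h]; group

lemma mem_center_of_commute_gen {g : Adj X} (h : ∀ x, Commute (gen x) g) :
    g ∈ Subgroup.center (Adj X) := by
  rw [Subgroup.mem_center_iff]
  intro z
  induction z using Adj.induction with
  | gen x => exact h x
  | one => simp
  | mul a b ha hb => exact (Commute.mul_left ha hb).eq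
  | inv a ha => exact (Commute.inv_left ha).eq

lemma ker_innHom_le_center : (innHom (X := X)).ker ≤ Subgroup.center (Adj X) := by
  intro g hg
  refine mem_center_of_commute_gen fun x => ?_
  have hx : ract x g = x := by simp [ract, (MonoidHom.mem_ker.mp hg)]
  have := gen_ract x g
  rw [hx, eq_comm, mul_assoc, inv_mul_eq_iff_eq_mul] at this
  exact this

end PQuandle

open PQuandle

section Covering

variable {Y Z : Type*} [PQuandle Y] [PQuandle Z] {p : Y → Z}

@[simp] lemma adjMap_gen (hp : ∀ a b : Y, p (a ◁ b) = p a ◁ p b) (y : Y) :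
    adjMap p hp (gen y) = gen (p y) :=
  PresentedGroup.toGroup.of _

lemma adjMap_surjective (hp : ∀ a b : Y, p (a ◁ b) = p a ◁ p b)
    (hsurj : Function.Surjective p) : Function.Surjective (adjMap p hp) := by
  intro h
  refine PresentedGroup.generated_by _ (adjMap p hp).range (fun z => ?_) h
  obtain ⟨y, rfl⟩ := hsurj z
  exact ⟨gen y, adjMap_gen hp y⟩

noncomputable def coveringInnHom (hp : ∀ a b : Y, p (a ◁ b) = p a ◁ p b)
    (hsurj : Function.Surjective p) (hcov : ∀ a x y : Y, p x = p y → a ◁ x = a ◁ y) :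
    Adj Z →* Equiv.Perm Y :=
  Adj.lift (fun z => (act (Function.surjInv hsurj z))⁻¹) fun z w => by
    have hlift : p (Function.surjInv hsurj (z ◁ w)) =
        p (Function.surjInv hsurj z ◁ Function.surjInv hsurj w) := by
      rw [hp]; simp only [Function.surjInv_eq]
    rw [act_eq_of_map_eq hcov hlift, act_op]
    group

lemma coveringInnHom_comp_adjMap (hp : ∀ a b : Y, p (a ◁ b) = p a ◁ p b)
    (hsurj : Function.Surjective p) (hcov : ∀ a x y : Y, p x = p y → a ◁ x = a ◁ y) :
    (coveringInnHom hp hsurj hcov).comp (adjMap p hp) = innHom :=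
  Adj.hom_ext fun y => by
    simp only [MonoidHom.comp_apply, adjMap_gen, coveringInnHom, Adj.lift_gen, innHom_gen]
    rw [act_eq_of_map_eq hcov (Function.surjInv_eq hsurj (p y))]

lemma ker_adjMap_le_ker_innHom (hp : ∀ a b : Y, p (a ◁ b) = p a ◁ p b)
    (hsurj : Function.Surjective p) (hcov : ∀ a x y : Y, p x = p y → a ◁ x = a ◁ y) :
    (adjMap p hp).ker ≤ (innHom (X := Y)).ker := by
  rw [← coveringInnHom_comp_adjMap hp hsurj hcov, ← MonoidHom.comap_ker]
  exact MonoidHom.ker_le_comap _ _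

end Covering

open PQuandle in
/-- For a quandle covering `p : Y → Z`, the induced map `p_* : As(Y) → As(Z)` is surjective
with central kernel. -/
theorem stmt11 {Y Z : Type*} [PQuandle Y] [PQuandle Z] (p : Y → Z)
    (hp : ∀ a b : Y, p (a ◁ b) = p a ◁ p b) (hsurj : Function.Surjective p)
    (hcov : ∀ a x y : Y, p x = p y → a ◁ x = a ◁ y) :
    Function.Surjective (adjMap p hp) ∧
      (adjMap p hp).ker ≤ Subgroup.center (Adj Y) :=
  ⟨adjMap_surjective hp hsurj,
    (ker_adjMap_le_ker_innHom hp hsurj hcov).trans ker_innHom_le_center⟩
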